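/- For the Peng–Robinson thermic function A(v,T) = RT/(v−b) − α/((v+b)² − 2b²), any smooth B(v,T) with (T⁻²B)_v = (T⁻¹A)_T must satisfy (b² − 2bv − v²)B_v + α = 0, whose general solution is B = F(T) − (α/(√2 b)) arctanh((v+b)/(√2 b)) for an arbitrary smooth F(T). -/

import Mathlib

/-- Inverse hyperbolic tangent. -/
noncomputable def Real.arctanh (x : ℝ) : ℝ := Real.log ((1 + x) / (1 - x)) / 2

lemma stmt14_aux (s x α : ℝ) (hs : s ≠ 0) (hu : 1 + x ≠ 0) (hw : 1 - x ≠ 0) :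
    α / s * ((1 / s * (1 - x) - (1 + x) * -(1 / s)) / (1 - x) ^ 2 / ((1 + x) / (1 - x)) / 2)
      = α / (s ^ 2 * ((1 - x) * (1 + x))) := by
  field_simp
  ring

set_option maxHeartbeats 1000000 in
/-- For the Peng–Robinson thermic function A = RT/(v−b) − α/((v+b)² − 2b²),
any smooth B with (T⁻²B)_v = (T⁻¹A)_T satisfies (b² − 2bv − v²)B_v + α = 0,
and hence B = F(T) − (α/(√2 b))arctanh((v+b)/(√2 b)) for some F. -/
theorem stmt14 (R α b : ℝ) (hR : 0 < R) (hα : 0 < α) (hb : 0 < b)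
    (A : ℝ → ℝ → ℝ)
    (hA : A = fun v T => R * T / (v - b) - α / ((v + b) ^ 2 - 2 * b ^ 2))
    (B : ℝ → ℝ → ℝ) (hB : ContDiff ℝ (⊤ : ℕ∞) fun q : ℝ × ℝ => B q.1 q.2)
    (hcompat : ∀ v T : ℝ, b < v → 0 < T →
      deriv (fun v' => (T ^ 2)⁻¹ * B v' T) v = deriv (fun T' => T'⁻¹ * A v T') T) :
    (∀ v T : ℝ, b < v → 0 < T →
        (b ^ 2 - 2 * b * v - v ^ 2) * deriv (fun v' => B v' T) v + α = 0)
    ∧ ∃ F : ℝ → ℝ, ∀ v T : ℝ, b < v → 0 < T →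
        B v T = F T - α / (Real.sqrt 2 * b) * Real.arctanh ((v + b) / (Real.sqrt 2 * b)) := by
  set s : ℝ := Real.sqrt 2 * b with hs
  have hss : s ^ 2 = 2 * b ^ 2 := by
    rw [hs, mul_pow, Real.sq_sqrt (by norm_num : (0:ℝ) ≤ 2)]
  have hs0 : 0 < s := by
    have : (0:ℝ) < Real.sqrt 2 := Real.sqrt_pos.2 (by norm_num)
    positivity
  have hs0' : s ≠ 0 := ne_of_gt hs0
  have hslt : s < 2 * b := by nlinarith
  -- differentiability of B in the first variable
  have hBd : ∀ T : ℝ, Differentiable ℝ (fun v' => B v' T) := fun T =>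
    (hB.differentiable (by simp)).comp (f := fun v' : ℝ => (v', T))
      (differentiable_id.prodMk (differentiable_const T))
  -- key PDE for B_v
  have key : ∀ v T : ℝ, b < v → 0 < T →
      deriv (fun v' => B v' T) v = α / ((v + b) ^ 2 - 2 * b ^ 2) := by
    intro v T hv hT
    have hc : (0:ℝ) < (v + b) ^ 2 - 2 * b ^ 2 := by nlinarith
    have hc0 : ((v + b) ^ 2 - 2 * b ^ 2) ≠ 0 := ne_of_gt hc
    have hT0 : T ≠ 0 := ne_of_gt hT
    have hvb : v - b ≠ 0 := sub_ne_zero.2 (ne_of_gt hv)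
    have hRHS : deriv (fun T' => T'⁻¹ * A v T') T
        = α / ((v + b) ^ 2 - 2 * b ^ 2) / T ^ 2 := by
      have h1 : HasDerivAt (fun T' : ℝ => T'⁻¹) (-(T ^ 2)⁻¹) T := hasDerivAt_inv hT0
      have h2' : HasDerivAt (fun T' : ℝ => A v T') (R / (v - b)) T := by
        subst hA
        simpa using (((hasDerivAt_id T).const_mul R).div_const (v - b)).sub_const
          (α / ((v + b) ^ 2 - 2 * b ^ 2))
      rw [show deriv (fun T' => T'⁻¹ * A v T') T = _ from (h1.mul h2').deriv]
      subst hA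
      simp only
      field_simp
      ring
    have hL := hcompat v T hv hT
    rw [deriv_const_mul _ ((hBd T) v), hRHS] at hL
    have hT2 : (T:ℝ) ^ 2 ≠ 0 := pow_ne_zero _ hT0
    field_simp at hL
    have hL' : deriv (fun v' => B v' T) v * ((v + b) ^ 2 - 2 * b ^ 2) = α :=
      by rw [hL, show (v + b) ^ 2 - b ^ 2 * 2 = (v + b) ^ 2 - 2 * b ^ 2 by ring]; exact div_mul_cancel₀ α hc0
    rw [hL]
    ring
  constructor
  · intro v T hv hT
    rw [key v T hv hT]
    have hc : (0:ℝ) < (v + b) ^ 2 - 2 * b ^ 2 := by nlinarith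
    have hc0 : ((v + b) ^ 2 - 2 * b ^ 2) ≠ 0 := ne_of_gt hc
    rw [mul_div_assoc', div_add' _ _ _ hc0, div_eq_zero_iff]
    left
    ring
  · -- derivative of the arctanh term
    have hg : ∀ v : ℝ, b < v →
        HasDerivAt (fun v' => α / s * Real.arctanh ((v' + b) / s))
          (-(α / ((v + b) ^ 2 - 2 * b ^ 2))) v := by
      intro v hv
      have hc : (0:ℝ) < (v + b) ^ 2 - 2 * b ^ 2 := by nlinarith
      have hc0 : ((v + b) ^ 2 - 2 * b ^ 2) ≠ 0 := ne_of_gt hc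
      have hx1 : 1 < (v + b) / s := (one_lt_div hs0).2 (by nlinarith)
      have hu0 : (1 + (v + b) / s) ≠ 0 := by positivity
      have hw0 : (1 - (v + b) / s) ≠ 0 := by linarith
      have hu : HasDerivAt (fun v' : ℝ => 1 + (v' + b) / s) (1 / s) v := by
        simpa using (((hasDerivAt_id v).add_const b).div_const s).const_add 1
      have hw : HasDerivAt (fun v' : ℝ => 1 - (v' + b) / s) (-(1 / s)) v := by
        simpa using (((hasDerivAt_id v).add_const b).div_const s).const_sub 1
      have hq := hu.div hw hw0
      have hq0 : (1 + (v + b) / s) / (1 - (v + b) / s) ≠ 0 := div_ne_zero hu0 hw0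
      have hlog := (hq.log hq0).div_const 2
      have hd := hlog.const_mul (α / s)
      have hxs : (v + b) / s * s = v + b := div_mul_cancel₀ _ hs0'
      have e2 : s ^ 2 * ((1 - (v + b) / s) * (1 + (v + b) / s))
          = 2 * b ^ 2 - (v + b) ^ 2 := by
        linear_combination hss - ((v + b) / s * s + (v + b)) * hxs
      have hval : α / s *
          ((1 / s * (1 - (v + b) / s) - (1 + (v + b) / s) * -(1 / s)) / (1 - (v + b) / s) ^ 2 /
            ((1 + (v + b) / s) / (1 - (v + b) / s)) / 2)
          = -(α / ((v + b) ^ 2 - 2 * b ^ 2)) := by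
        have e1 : α / s *
            ((1 / s * (1 - (v + b) / s) - (1 + (v + b) / s) * -(1 / s)) / (1 - (v + b) / s) ^ 2 /
              ((1 + (v + b) / s) / (1 - (v + b) / s)) / 2)
            = α / (s ^ 2 * ((1 - (v + b) / s) * (1 + (v + b) / s))) := stmt14_aux s ((v + b) / s) α hs0' hu0 hw0
        rw [e1, e2, show (2 * b ^ 2 - (v + b) ^ 2) = -((v + b) ^ 2 - 2 * b ^ 2) by ring,
          div_neg]
      unfold Real.arctanh
      rw [← hval]
      exact hd
    refine ⟨fun T => B (b + 1) T + α / s * Real.arctanh ((b + 1 + b) / s), ?_⟩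
    intro v T hv hT
    have hderiv : ∀ x ∈ Set.Ioi b, HasDerivWithinAt
        (fun v' => B v' T + α / s * Real.arctanh ((v' + b) / s)) ((fun _ : ℝ => (0:ℝ)) x)
        (Set.Ioi b) x := by
      intro x hx
      have hx' : b < x := hx
      have h1 : HasDerivAt (fun v' => B v' T) (α / ((x + b) ^ 2 - 2 * b ^ 2)) x := by
        have := ((hBd T) x).hasDerivAt
        rwa [key x T hx' hT] at this
      have hsum := h1.add (hg x hx')
      have hz : α / ((x + b) ^ 2 - 2 * b ^ 2) + -(α / ((x + b) ^ 2 - 2 * b ^ 2)) = (0:ℝ) := by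
        ring
      rw [hz] at hsum
      exact hsum.hasDerivWithinAt
    have hLip := Convex.norm_image_sub_le_of_norm_hasDerivWithin_le (C := 0)
      hderiv (fun x _ => by simp) (convex_Ioi b) (Set.mem_Ioi.2 hv)
      (Set.mem_Ioi.2 (by linarith : b < b + 1))
    rw [zero_mul] at hLip
    have heq := norm_sub_eq_zero_iff.mp (le_antisymm hLip (norm_nonneg _))
    have heq' : B (b + 1) T + α / s * Real.arctanh ((b + 1 + b) / s)
        = B v T + α / s * Real.arctanh ((v + b) / s) := heq
    linarith [heq']
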